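/- For all integers n ≥ m ≥ 2, the number of fuzzy bitopological spaces on an n-element set X with membership values in an m-element chain M in which both fuzzy topologies have exactly k = m^n − m^(n−2) open sets is (τᵢ, τⱼ)_F(n, m, k) = (n⁴ − 2n³ + 2n² − n)/2, i.e. it equals T(T+1)/2 with T = n(n−1). -/

import Mathlib

/-- A fuzzy topology on `Fin n` with membership values in the `m`-element chain `Fin m`:
a collection of fuzzy sets (functions `Fin n → Fin m`) containing the constant function
with the least value, the constant function with the greatest value, and closed under
pointwise (binary) supremum and infimum. -/
def IsFuzzyTopology {n m : ℕ} (hm : m ≠ 0) (τ : Finset (Fin n → Fin m)) : Prop :=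
  (fun _ => (⟨0, Nat.pos_of_ne_zero hm⟩ : Fin m)) ∈ τ ∧
  (fun _ => (⟨m - 1, by omega⟩ : Fin m)) ∈ τ ∧
  (∀ f ∈ τ, ∀ g ∈ τ, f ⊔ g ∈ τ) ∧
  (∀ f ∈ τ, ∀ g ∈ τ, f ⊓ g ∈ τ)

/-- `tauF n m k hm` is the number of fuzzy topologies on an `n`-element set with values in an
`m`-element chain having exactly `k` open sets. -/
noncomputable def tauF (n m k : ℕ) (hm : m ≠ 0) : ℕ :=
  Nat.card {τ : Finset (Fin n → Fin m) // IsFuzzyTopology hm τ ∧ τ.card = k}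

/-- `biTauF n m k hm` is the number of fuzzy bitopological spaces (unordered pairs of fuzzy
topologies, allowing equal ones) on an `n`-element set with values in an `m`-element chain in
which both topologies have exactly `k` open sets. -/
noncomputable def biTauF (n m k : ℕ) (hm : m ≠ 0) : ℕ :=
  Nat.card (Sym2 {τ : Finset (Fin n → Fin m) // IsFuzzyTopology hm τ ∧ τ.card = k})

/-!
The complement `C` of such a fuzzy topology `τ` has `m ^ (n - 2)` elements. A minimal element `p`
of `C` is not the join of two smaller fuzzy sets, so it is supported at a single point `i`. The
fuzzy set `χ` with value `1` at `i` and `0` elsewhere is then not open: otherwise `χ ⊓ f = p` would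
put the whole slice `{f | f i = p i}`, of size `m ^ (n - 1)`, into `C`. Hence the meet of all open
sets with value `1` at `i` differs from `χ`, i.e. is nonzero at some `j ≠ i`, and no open set takes
value `1` at `i` and `0` at `j`. That block has `m ^ (n - 2)` elements, so it is all of `C`.
Conversely, over a chain every such complement is a fuzzy topology, and distinct pairs `(i, j)`
give distinct ones: there are `T = n (n - 1)` topologies and `T (T + 1) / 2` unordered pairs.
-/

open Finset

section

variable {ι α : Type*} [DecidableEq ι]

section Counting

variable [Fintype ι] [Fintype α] [DecidableEq α]

lemma card_filter_apply_eq (i : ι) (a : α) :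
    #{f : ι → α | f i = a} = Fintype.card α ^ (Fintype.card ι - 1) := by
  simpa using Fintype.card_filter_piFinset_const_eq_of_mem univ i (mem_univ a)

lemma card_filter_apply_eq_and_apply_eq {i j : ι} (hij : i ≠ j) (a b : α) :
    #{f : ι → α | f i = a ∧ f j = b} = Fintype.card α ^ (Fintype.card ι - 2) := by
  let s : ι → Finset α := Function.update (fun _ ↦ univ) i {a}
  have hs : Fintype.piFinset s = ({f : ι → α | f i = a} : Finset (ι → α)) := by
    rw [Fintype.piFinset_update_singleton_eq_filter_piFinset_eq _ i (mem_univ a),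
      Fintype.piFinset_univ]
  have hi : i ∈ univ.erase j := mem_erase.2 ⟨hij, mem_univ i⟩
  calc #{f : ι → α | f i = a ∧ f j = b}
      = ∏ k ∈ univ.erase j, #(s k) := by
        rw [← Fintype.card_filter_piFinset_eq_of_mem s j (by simp [s, hij.symm]), hs,
          filter_filter]
    _ = Fintype.card α ^ (Fintype.card ι - 2) := by
        simp only [s, Function.apply_update (fun _ ↦ Finset.card), prod_update_of_mem hi,
          card_singleton, card_univ, prod_const, one_mul, sdiff_singleton_eq_erase,
          card_erase_of_mem hi, card_erase_of_mem (mem_univ j), Nat.sub_sub]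

end Counting

lemma Minimal.apply_eq_bot_of_ne [SemilatticeSup α] [OrderBot α] {τ : Set (ι → α)}
    (hτ : SupClosed τ) {p : ι → α} (hp : Minimal (· ∉ τ) p) {i t : ι} (hpi : p i ≠ ⊥)
    (hti : t ≠ i) : p t = ⊥ := by
  by_contra hpt
  set a := Function.update p t ⊥
  set b := Function.update (⊥ : ι → α) t (p t)
  have ha : a < p := update_lt_self_iff.2 (bot_lt_iff_ne_bot.2 hpt)
  have hb : b < p := by
    refine lt_of_le_of_ne (update_le_iff.2 ⟨le_rfl, fun _ _ ↦ bot_le⟩) fun h ↦ hpi ?_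
    rw [← h]; exact Function.update_of_ne hti.symm _ _
  have hab : a ⊔ b = p := by
    ext s
    obtain rfl | hs := eq_or_ne s t <;> simp [a, b, *]
  exact hp.prop (hab ▸ hτ (not_not.1 (hp.not_prop_of_lt ha)) (not_not.1 (hp.not_prop_of_lt hb)))

section Blocks

variable [Fintype ι] [Fintype α] [DecidableEq α]

def topBotBlock [Top α] [Bot α] (i j : ι) : Finset (ι → α) := {f | f i = ⊤ ∧ f j = ⊥}

@[simp]
lemma mem_topBotBlock [Top α] [Bot α] {i j : ι} {f : ι → α} :
    f ∈ topBotBlock i j ↔ f i = ⊤ ∧ f j = ⊥ := by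
  simp [topBotBlock]

section Lattice

variable [Lattice α] [BoundedOrder α] {τ : Finset (ι → α)}

lemma update_bot_top_notMem (hτ : InfClosed (τ : Set (ι → α))) {p : ι → α} (hp : p ∉ τ)
    {i : ι} (hsupp : ∀ t ≠ i, p t = ⊥)
    (hcard : #τᶜ < Fintype.card α ^ (Fintype.card ι - 1)) :
    Function.update ⊥ i ⊤ ∉ τ := by
  intro he
  have hslice : ({f : ι → α | f i = p i} : Finset (ι → α)) ⊆ τᶜ := by
    intro y hy
    rw [mem_filter] at hy
    refine mem_compl.2 fun hyτ ↦ hp ?_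
    have hmeet : Function.update ⊥ i ⊤ ⊓ y = p := by
      ext s
      obtain rfl | hs := eq_or_ne s i
      · simp [hy.2]
      · simp [hs, hsupp s hs]
    exact hmeet ▸ hτ he hyτ
  have hle := card_le_card hslice
  rw [card_filter_apply_eq] at hle
  omega

lemma exists_topBotBlock_subset_compl (hτ : InfClosed (τ : Set (ι → α))) (htop : ⊤ ∈ τ)
    {i : ι} (he : Function.update ⊥ i ⊤ ∉ τ) : ∃ j ≠ i, topBotBlock i j ⊆ τᶜ := by
  set K := τ.filter (· i = ⊤)
  have hK : K.Nonempty := ⟨⊤, mem_filter.2 ⟨htop, rfl⟩⟩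
  set x₀ := K.inf' hK id
  have hx₀ : x₀ ∈ τ := hτ.finsetInf'_mem hK fun x hx ↦ (mem_filter.1 hx).1
  have hx₀i : x₀ i = ⊤ := by
    simp only [x₀, Finset.inf'_apply]
    exact top_unique (le_inf' _ _ fun x hx ↦ (mem_filter.1 hx).2.ge)
  obtain ⟨j, hj⟩ := Function.ne_iff.1 (ne_of_mem_of_not_mem hx₀ he)
  have hji : j ≠ i := by
    rintro rfl
    simp [hx₀i] at hj
  have hx₀j : x₀ j ≠ ⊥ := by simpa [hji] using hj
  refine ⟨j, hji, fun x hx ↦ mem_compl.2 fun hxτ ↦ hx₀j ?_⟩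
  obtain ⟨hxi, hxj⟩ := mem_topBotBlock.1 hx
  exact le_bot_iff.1 (hxj ▸ inf'_le id (mem_filter.2 ⟨hxτ, hxi⟩) j)

theorem exists_eq_compl_topBotBlock [Nontrivial α] (hι : 2 ≤ Fintype.card ι)
    (hbot : ⊥ ∈ τ) (htop : ⊤ ∈ τ) (hτ : IsSublattice (τ : Set (ι → α)))
    (hcard : #τᶜ = Fintype.card α ^ (Fintype.card ι - 2)) :
    ∃ i j, i ≠ j ∧ τ = (topBotBlock i j)ᶜ := by
  have hα := Fintype.one_lt_card (α := α)
  obtain ⟨p, hp⟩ := exists_minimal (s := τᶜ) (card_pos.1 (hcard ▸ Nat.pow_pos (by omega)))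
  replace hp : Minimal (· ∉ (τ : Set (ι → α))) p := by simpa using hp
  obtain ⟨i, hpi⟩ := Function.ne_iff.1 fun h : p = ⊥ ↦ hp.prop (h ▸ hbot)
  have he := update_bot_top_notMem hτ.infClosed hp.prop
    (fun t ht ↦ hp.apply_eq_bot_of_ne hτ.supClosed hpi ht)
    (hcard ▸ Nat.pow_lt_pow_right hα (by omega))
  obtain ⟨j, hji, hsub⟩ := exists_topBotBlock_subset_compl hτ.infClosed htop he
  refine ⟨i, j, hji.symm, eq_compl_comm.2 (eq_of_subset_of_card_le hsub ?_)⟩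
  rw [hcard, topBotBlock, card_filter_apply_eq_and_apply_eq hji.symm]

end Lattice

lemma isSublattice_compl_topBotBlock [LinearOrder α] [BoundedOrder α] (i j : ι) :
    IsSublattice (((topBotBlock i j)ᶜ : Finset (ι → α)) : Set (ι → α)) where
  supClosed f hf g hg := by
    simp only [coe_compl, Set.mem_compl_iff, mem_coe, mem_topBotBlock, not_and] at *
    intro hi hj
    rw [Pi.sup_apply, sup_eq_bot_iff] at hj
    rcases le_total (f i) (g i) with h | h
    · exact hg (by rwa [Pi.sup_apply, sup_eq_right.2 h] at hi) hj.2
    · exact hf (by rwa [Pi.sup_apply, sup_eq_left.2 h] at hi) hj.1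
  infClosed f hf g hg := by
    simp only [coe_compl, Set.mem_compl_iff, mem_coe, mem_topBotBlock, not_and] at *
    intro hi hj
    rw [Pi.inf_apply, inf_eq_top_iff] at hi
    rcases le_total (f j) (g j) with h | h
    · exact hf hi.1 (by rwa [Pi.inf_apply, inf_eq_left.2 h] at hj)
    · exact hg hi.2 (by rwa [Pi.inf_apply, inf_eq_right.2 h] at hj)

section PartialOrder

variable [PartialOrder α] [BoundedOrder α] [Nontrivial α]

lemma bot_notMem_topBotBlock (i j : ι) : ⊥ ∉ topBotBlock (α := α) i j := by
  simp [bot_ne_top]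

lemma top_notMem_topBotBlock (i j : ι) : ⊤ ∉ topBotBlock (α := α) i j := by
  simp [top_ne_bot]

lemma topBotBlock_inj {i j i' j' : ι} (hij : i ≠ j)
    (h : topBotBlock (α := α) i j = topBotBlock i' j') : i = i' ∧ j = j' := by
  have hi : Function.update ⊥ i ⊤ ∈ topBotBlock (α := α) i' j' := by
    simp [← h, hij.symm]
  have hj : Function.update ⊤ j ⊥ ∈ topBotBlock (α := α) i' j' := by
    simp [← h, hij]
  constructor
  · by_contra hne
    simp [Function.update_of_ne (Ne.symm hne)] at hi
  · by_contra hne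
    simp [Function.update_of_ne (Ne.symm hne)] at hj

end PartialOrder

end Blocks

end

lemma card_eq_card_sub_iff_card_compl_eq {β : Type*} [Fintype β] [DecidableEq β]
    {s : Finset β} {k : ℕ} (hk : k ≤ Fintype.card β) : #s = Fintype.card β - k ↔ #sᶜ = k := by
  have := card_le_univ s
  rw [card_compl]
  omega

theorem natCard_boundedSublattice_card_eq {ι α : Type*} [Fintype ι] [Fintype α] [LinearOrder α]
    [BoundedOrder α] [Nontrivial α] (hι : 2 ≤ Fintype.card ι) :
    Nat.card {τ : Finset (ι → α) // (⊥ ∈ τ ∧ ⊤ ∈ τ ∧ IsSublattice (τ : Set (ι → α))) ∧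
      #τ = Fintype.card α ^ Fintype.card ι - Fintype.card α ^ (Fintype.card ι - 2)} =
      Fintype.card ι * Fintype.card ι - Fintype.card ι := by
  classical
  have hcard_compl (τ : Finset (ι → α)) :
      #τ = Fintype.card α ^ Fintype.card ι - Fintype.card α ^ (Fintype.card ι - 2) ↔
        #τᶜ = Fintype.card α ^ (Fintype.card ι - 2) := by
    rw [← Fintype.card_fun]
    exact card_eq_card_sub_iff_card_compl_eq (by
      rw [Fintype.card_fun]; exact Nat.pow_le_pow_right Fintype.card_pos (by omega))
  let φ : (univ : Finset ι).offDiag → {τ : Finset (ι → α) // (⊥ ∈ τ ∧ ⊤ ∈ τ ∧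
      IsSublattice (τ : Set (ι → α))) ∧
      #τ = Fintype.card α ^ Fintype.card ι - Fintype.card α ^ (Fintype.card ι - 2)} :=
    fun ij ↦ ⟨(topBotBlock ij.1.1 ij.1.2)ᶜ,
      ⟨mem_compl.2 (bot_notMem_topBotBlock _ _), mem_compl.2 (top_notMem_topBotBlock _ _),
        isSublattice_compl_topBotBlock _ _⟩,
      (hcard_compl _).2 (by
        rw [compl_compl, topBotBlock, card_filter_apply_eq_and_apply_eq (mem_offDiag.1 ij.2).2.2])⟩
  have hφ : Function.Bijective φ := by
    refine ⟨fun ⟨⟨i, j⟩, hij⟩ ⟨⟨i', j'⟩, _⟩ h ↦ ?_, fun ⟨τ, ⟨hbot, htop, hτ⟩, hcard⟩ ↦ ?_⟩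
    · obtain ⟨rfl, rfl⟩ := topBotBlock_inj (mem_offDiag.1 hij).2.2
        (compl_injective (congrArg Subtype.val h))
      rfl
    · obtain ⟨i, j, hij, rfl⟩ :=
        exists_eq_compl_topBotBlock hι hbot htop hτ ((hcard_compl τ).1 hcard)
      exact ⟨⟨(i, j), by simpa using hij⟩, rfl⟩
  rw [← Nat.card_eq_of_bijective φ hφ, Nat.card_eq_fintype_card, Fintype.card_coe, offDiag_card,
    card_univ]

lemma isFuzzyTopology_iff {n k : ℕ} (hk : k + 1 ≠ 0) (τ : Finset (Fin n → Fin (k + 1))) :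
    IsFuzzyTopology hk τ ↔ ⊥ ∈ τ ∧ ⊤ ∈ τ ∧ IsSublattice (τ : Set (Fin n → Fin (k + 1))) :=
  ⟨fun ⟨hbot, htop, hsup, hinf⟩ ↦ ⟨hbot, htop, fun _ hf _ hg ↦ hsup _ hf _ hg,
      fun _ hf _ hg ↦ hinf _ hf _ hg⟩,
    fun ⟨hbot, htop, hτ⟩ ↦ ⟨hbot, htop, fun _ hf _ hg ↦ hτ.supClosed hf hg,
      fun _ hf _ hg ↦ hτ.infClosed hf hg⟩⟩

lemma natCast_choose_two_succ_mul_sub_self (n : ℕ) :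
    (((n * n - n + 1).choose 2 : ℕ) : ℤ) = ((n : ℤ) ^ 4 - 2 * n ^ 3 + 2 * n ^ 2 - n) / 2 := by
  rw [Nat.choose_two_right, Nat.add_sub_cancel, Int.natCast_div,
    Nat.cast_mul, Nat.cast_add, Nat.cast_sub (Nat.le_mul_self n)]
  push_cast
  ring_nf

theorem biTauF_maximal_nondiscrete (n m : ℕ) (hm : 2 ≤ m) (hnm : m ≤ n) :
    (biTauF n m (m ^ n - m ^ (n - 2)) (by omega) : ℤ) =
      ((n : ℤ) ^ 4 - 2 * (n : ℤ) ^ 3 + 2 * (n : ℤ) ^ 2 - (n : ℤ)) / 2 := by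
  -- `Fin m` has a `BoundedOrder` instance only for `m` of the form `k + 1`.
  obtain ⟨k, rfl⟩ : ∃ k, m = k + 2 := ⟨m - 2, by omega⟩
  have hcount : Nat.card {τ : Finset (Fin n → Fin (k + 2)) //
      IsFuzzyTopology (by omega) τ ∧ #τ = (k + 2) ^ n - (k + 2) ^ (n - 2)} = n * n - n := by
    simpa only [isFuzzyTopology_iff, Fintype.card_fin] using
      natCard_boundedSublattice_card_eq (ι := Fin n) (α := Fin (k + 2)) (by rw [Fintype.card_fin]; omega)
  rw [biTauF, Sym2.natCard, hcount, natCast_choose_two_succ_mul_sub_self]
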